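/- arXiv:1706.06596 — 6 statements merged into one kernel-verified Lean document; each statement's English description precedes it below -/
import Mathlib

section
/- (Pearle-Braunstein-Caves inequality) Let N ≥ 2 and let A_1,...,A_N, B_1,...,B_N : Λ → [-1,1] be random variables on a probability space (Λ, P). Then |E(A_1B_1)+E(A_2B_1)| + |E(A_2B_2)+E(A_3B_2)| + ... + |E(A_NB_N) - E(A_1B_N)| ≤ 2N - 2. -/
open MeasureTheory Finset

/-! Pointwise, for numbers `aᵢ ∈ [-1, 1]` the chain `∑ |aᵢ + aᵢ₊₁| + |a_N - a₁|` is at most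
`2N - 2`: adding the link `aₙ₊₁` to a chain closed by `|aₙ - a₁|` costs at most `2`.
Since `|E((Aᵢ + Aₖ) B)| ≤ E|Aᵢ + Aₖ|` for `|B| ≤ 1`, integrating this bound over `Λ` gives the
inequality. -/

lemma abs_add_add_abs_sub_le_two_add_abs_sub {x y z : ℝ}
    (hx : |x| ≤ 1) (hy : |y| ≤ 1) (hz : |z| ≤ 1) :
    |x + y| + |y - z| ≤ 2 + |x - z| := by
  obtain ⟨-, hx⟩ := abs_le.mp hx
  obtain ⟨hy, hy'⟩ := abs_le.mp hy
  obtain ⟨hz, -⟩ := abs_le.mp hz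
  rcases abs_cases (x + y) with ⟨h₁, s₁⟩ | ⟨h₁, s₁⟩ <;>
    rcases abs_cases (y - z) with ⟨h₂, s₂⟩ | ⟨h₂, s₂⟩ <;>
    rcases abs_cases (x - z) with ⟨h₃, s₃⟩ | ⟨h₃, s₃⟩ <;>
    linarith

lemma sum_abs_add_add_abs_sub_le {a : ℕ → ℝ} (ha : ∀ i, |a i| ≤ 1) {N : ℕ} (hN : 1 ≤ N) :
    ∑ i ∈ Ico 1 N, |a i + a (i + 1)| + |a N - a 1| ≤ 2 * N - 2 := by
  induction N, hN using Nat.le_induction with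
  | base => simp
  | succ n hn ih =>
    have hstep := abs_add_add_abs_sub_le_two_add_abs_sub (ha n) (ha (n + 1)) (ha 1)
    rw [sum_Ico_succ_top hn]
    push_cast
    linarith

section Integral

variable {Ω : Type*} [MeasurableSpace Ω] {μ : Measure Ω} {f f' g : Ω → ℝ}

lemma abs_integral_mul_le_integral_abs (hf : Integrable f μ) (hg : ∀ x, |g x| ≤ 1) :
    |∫ x, f x * g x ∂μ| ≤ ∫ x, |f x| ∂μ :=
  norm_integral_le_of_norm_le (f := fun x => f x * g x) hf.abs <| ae_of_all _ fun x => by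
    simpa only [Real.norm_eq_abs, abs_mul] using mul_le_of_le_one_right (abs_nonneg (f x)) (hg x)

variable (hg_meas : AEStronglyMeasurable g μ) (hg : ∀ x, |g x| ≤ 1)
include hg_meas hg

lemma MeasureTheory.Integrable.mul_of_abs_le_one (hf : Integrable f μ) :
    Integrable (fun x => f x * g x) μ :=
  hf.mul_bdd hg_meas (c := 1) (ae_of_all _ fun x => (Real.norm_eq_abs _).trans_le (hg x))

lemma abs_integral_mul_add_integral_mul_le (hf : Integrable f μ) (hf' : Integrable f' μ) :
    |(∫ x, f x * g x ∂μ) + ∫ x, f' x * g x ∂μ| ≤ ∫ x, |f x + f' x| ∂μ := by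
  rw [← integral_add (hf.mul_of_abs_le_one hg_meas hg) (hf'.mul_of_abs_le_one hg_meas hg)]
  simpa only [add_mul] using
    abs_integral_mul_le_integral_abs (f := fun x => f x + f' x) (hf.add hf') hg

lemma abs_integral_mul_sub_integral_mul_le (hf : Integrable f μ) (hf' : Integrable f' μ) :
    |(∫ x, f x * g x ∂μ) - ∫ x, f' x * g x ∂μ| ≤ ∫ x, |f x - f' x| ∂μ := by
  rw [← integral_sub (hf.mul_of_abs_le_one hg_meas hg) (hf'.mul_of_abs_le_one hg_meas hg)]
  simpa only [sub_mul] using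
    abs_integral_mul_le_integral_abs (f := fun x => f x - f' x) (hf.sub hf') hg

end Integral

/-- Pearle-Braunstein-Caves chained inequality: for N ≥ 2 and random variables
    A₁,…,A_N, B₁,…,B_N taking values in [-1,1],
    |E(A₁B₁)+E(A₂B₁)| + … + |E(A_N B_N) - E(A₁ B_N)| ≤ 2N - 2. -/
theorem pearle_braunstein_caves
    {Ω : Type*} [MeasurableSpace Ω] (μ : Measure Ω) [IsProbabilityMeasure μ]
    (N : ℕ) (hN : 2 ≤ N) (A B : ℕ → Ω → ℝ)
    (hAmeas : ∀ i, Measurable (A i)) (hBmeas : ∀ i, Measurable (B i))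
    (hAbound : ∀ i x, A i x ∈ Set.Icc (-1 : ℝ) 1)
    (hBbound : ∀ i x, B i x ∈ Set.Icc (-1 : ℝ) 1) :
    (∑ i ∈ Finset.Ico 1 N,
        |(∫ x, A i x * B i x ∂μ) + ∫ x, A (i + 1) x * B i x ∂μ|)
      + |(∫ x, A N x * B N x ∂μ) - ∫ x, A 1 x * B N x ∂μ|
      ≤ 2 * (N : ℝ) - 2 := by
  have hA : ∀ i, Integrable (A i) μ := fun i =>
    .of_mem_Icc (-1) 1 (hAmeas i).aemeasurable (ae_of_all _ (hAbound i))
  have hB : ∀ i x, |B i x| ≤ 1 := fun i x => abs_le.mpr (hBbound i x)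
  have hlink : ∀ i k, Integrable (fun x => |A i x + A k x|) μ := fun i k =>
    ((hA i).add (hA k)).abs
  have hclose : Integrable (fun x => |A N x - A 1 x|) μ := ((hA N).sub (hA 1)).abs
  calc _ ≤ (∑ i ∈ Ico 1 N, ∫ x, |A i x + A (i + 1) x| ∂μ) + ∫ x, |A N x - A 1 x| ∂μ :=
        add_le_add
          (sum_le_sum fun i _ => abs_integral_mul_add_integral_mul_le
            (hBmeas i).aestronglyMeasurable (hB i) (hA i) (hA (i + 1)))
          (abs_integral_mul_sub_integral_mul_le
            (hBmeas N).aestronglyMeasurable (hB N) (hA N) (hA 1))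
    _ = ∫ x, (∑ i ∈ Ico 1 N, |A i x + A (i + 1) x|) + |A N x - A 1 x| ∂μ := by
        rw [integral_add (integrable_finsetSum _ fun i _ => hlink i (i + 1)) hclose,
          integral_finsetSum _ fun i _ => hlink i (i + 1)]
    _ ≤ ∫ _, (2 * (N : ℝ) - 2) ∂μ :=
        integral_mono ((integrable_finsetSum _ fun i _ => hlink i (i + 1)).add hclose)
          (integrable_const _) fun x =>
            sum_abs_add_add_abs_sub_le (fun i => abs_le.mpr (hAbound i x)) (by omega)
    _ = 2 * (N : ℝ) - 2 := by simp
end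

section
/- For all integers N ≥ 2, the quantum value 2N·cos(π/(2N)) strictly exceeds the local-realist bound 2N - 2. -/
open Real

/-! Since `cos θ > 1 - θ² / 2` for `θ ≠ 0`, the quantum value exceeds `2N - π² / (4N)`,
and `π² < 16 ≤ 8N`. -/

theorem sub_two_lt_mul_cos_pi_div {x : ℝ} (hx : π ^ 2 ≤ 8 * x) :
    2 * x - 2 < 2 * x * cos (π / (2 * x)) := by
  have hx0 : 0 < x := by nlinarith [pi_pos]
  have hθ : π / (2 * x) ≠ 0 := by positivity
  calc 2 * x - 2 ≤ 2 * x * (1 - (π / (2 * x)) ^ 2 / 2) := by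
        field_simp
        nlinarith
    _ < 2 * x * cos (π / (2 * x)) :=
        mul_lt_mul_of_pos_left (one_sub_sq_div_two_lt_cos hθ) (by positivity)

/-- For all integers N ≥ 2, the quantum value 2N·cos(π/(2N)) strictly exceeds
    the local-realist bound 2N - 2. -/
theorem quantum_exceeds_classical (N : ℕ) (hN : 2 ≤ N) :
    2 * (N : ℝ) - 2 < 2 * (N : ℝ) * Real.cos (π / (2 * N)) := by
  have hNR : (2 : ℝ) ≤ N := by exact_mod_cast hN
  exact sub_two_lt_mul_cos_pi_div (by nlinarith [pi_pos, pi_lt_four])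
end

section
/- (PBC with coincidence probability) Let N ≥ 2, let A_1,...,A_N, B_1,...,B_N : Λ → [-1,1] be random variables, and let Λ_1,...,Λ_{2N} be measurable events with P(Λ_i) ≥ γ for all i, where 0 < γ ≤ 1. Define X_i = A_{a_i}B_{b_i} with the index sequences a = (1,2,2,3,3,...,N,N,1) and b = (1,1,2,2,...,N,N), and S_{C,N} = |E(X_1|Λ_1)+E(X_2|Λ_2)| + |E(X_3|Λ_3)+E(X_4|Λ_4)| + ... + |E(X_{2N-1}|Λ_{2N-1}) - E(X_{2N}|Λ_{2N})|. Then S_{C,N} ≤ (4N-2)/γ - 2N. -/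
open MeasureTheory Real Finset

/-!
Write `c_k = E(X_k | Λ_k)`. As `P(Λ_k) c_k = E X_k - ∫_{Λ_kᶜ} X_k` and `|X_k| ≤ 1`, we get
`|γ c_k - E X_k| ≤ (P(Λ_k) - γ) + (1 - P(Λ_k)) = 1 - γ`, so `γ S_{C,N}` exceeds the same
chained sum of the unconditioned `E X_k` by at most `2N(1 - γ)`. That sum is at most `2N - 2`
(chained Bell inequality): pointwise `X_{2k+1} + X_{2k+2} = (A_{k+1} + A_{k+2}) B_{k+1}` and
`X_{2N-1} - X_{2N} = (A_N - A_1) B_N`, and `|A_N - A_1| ≤ ∑ |A_{k+2} - A_{k+1}|` pairs with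
`∑ |A_{k+1} + A_{k+2}|` through `|x + y| + |y - x| ≤ 2`.
-/

lemma abs_add_add_abs_sub_le_two {x y : ℝ} (hx : |x| ≤ 1) (hy : |y| ≤ 1) :
    |x + y| + |y - x| ≤ 2 := by
  obtain ⟨hx₁, hx₂⟩ := abs_le.mp hx
  obtain ⟨hy₁, hy₂⟩ := abs_le.mp hy
  rcases abs_cases (x + y) with ⟨h, -⟩ | ⟨h, -⟩ <;>
    rcases abs_cases (y - x) with ⟨h', -⟩ | ⟨h', -⟩ <;> linarith

lemma sum_range_abs_add_add_abs_sub_le {n : ℕ} (hn : 1 ≤ n) {α : ℕ → ℝ}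
    (hα : ∀ i, |α i| ≤ 1) :
    ∑ k ∈ range (n - 1), |α (k + 1) + α (k + 2)| + |α n - α 1| ≤ 2 * n - 2 := by
  have h_telescope : |α n - α 1| ≤ ∑ k ∈ range (n - 1), |α (k + 2) - α (k + 1)| := by
    have h := sum_range_sub (fun i => α (i + 1)) (n - 1)
    rw [Nat.sub_add_cancel hn] at h
    rw [← h]
    exact abs_sum_le_sum_abs _ _
  have h_pairs : ∑ k ∈ range (n - 1), (|α (k + 1) + α (k + 2)| + |α (k + 2) - α (k + 1)|)
      ≤ 2 * ((n - 1 : ℕ) : ℝ) :=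
    calc _ ≤ ∑ _k ∈ range (n - 1), (2 : ℝ) :=
          sum_le_sum fun k _ => abs_add_add_abs_sub_le_two (hα _) (hα _)
      _ = _ := by simp [mul_comm]
  rw [sum_add_distrib, Nat.cast_sub hn, Nat.cast_one] at h_pairs
  linarith

def chainedSum (N : ℕ) (c : ℕ → ℝ) : ℝ :=
  ∑ k ∈ range (N - 1), |c (2 * k + 1) + c (2 * k + 2)| + |c (2 * N - 1) - c (2 * N)|

lemma chainedSum_nonneg (N : ℕ) (c : ℕ → ℝ) : 0 ≤ chainedSum N c := by
  unfold chainedSum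
  positivity

lemma chainedSum_const_mul {γ : ℝ} (hγ : 0 ≤ γ) (N : ℕ) (c : ℕ → ℝ) :
    chainedSum N (fun k => γ * c k) = γ * chainedSum N c := by
  simp only [chainedSum, ← mul_add, ← mul_sub, abs_mul, abs_of_nonneg hγ, ← mul_sum]

lemma chainedSum_le_add_of_abs_sub_le {N : ℕ} (hN : 1 ≤ N) {c d : ℕ → ℝ} {ε : ℝ}
    (h : ∀ k ∈ Icc 1 (2 * N), |c k - d k| ≤ ε) :
    chainedSum N c ≤ chainedSum N d + 2 * N * ε := by
  have h_add : ∀ i j, |c i + c j| ≤ |d i + d j| + |c i - d i| + |c j - d j| := fun i j => by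
    have := abs_sub_abs_le_abs_sub (c i + c j) (d i + d j)
    have := abs_add_le (c i - d i) (c j - d j)
    rw [show c i + c j - (d i + d j) = c i - d i + (c j - d j) by ring] at *
    linarith
  have h_sub : ∀ i j, |c i - c j| ≤ |d i - d j| + |c i - d i| + |c j - d j| := fun i j => by
    have := abs_sub_abs_le_abs_sub (c i - c j) (d i - d j)
    have := abs_sub (c i - d i) (c j - d j)
    rw [show c i - c j - (d i - d j) = c i - d i - (c j - d j) by ring] at *
    linarith
  have h_pairs : ∑ k ∈ range (N - 1), |c (2 * k + 1) + c (2 * k + 2)|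
      ≤ ∑ k ∈ range (N - 1), (|d (2 * k + 1) + d (2 * k + 2)| + 2 * ε) := by
    refine sum_le_sum fun k hk => ?_
    have hk := mem_range.mp hk
    have h₁ := h (2 * k + 1) (mem_Icc.mpr (by omega))
    have h₂ := h (2 * k + 2) (mem_Icc.mpr (by omega))
    linarith [h_add (2 * k + 1) (2 * k + 2)]
  have h_last := h_sub (2 * N - 1) (2 * N)
  have h₁ := h (2 * N - 1) (mem_Icc.mpr (by omega))
  have h₂ := h (2 * N) (mem_Icc.mpr (by omega))
  rw [sum_add_distrib, sum_const, card_range, nsmul_eq_mul, Nat.cast_sub hN, Nat.cast_one]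
    at h_pairs
  unfold chainedSum
  linarith

lemma chainedSum_integral_le {Ω : Type*} [MeasurableSpace Ω] {μ : Measure Ω} (N : ℕ)
    {X : ℕ → Ω → ℝ} (hX : ∀ k, Integrable (X k) μ) :
    chainedSum N (fun k => ∫ x, X k x ∂μ) ≤ ∫ x, chainedSum N (fun k => X k x) ∂μ := by
  have h_add : ∀ i j, Integrable (fun x => |X i x + X j x|) μ := fun i j =>
    ((hX i).add (hX j)).abs
  have h_sub : ∀ i j, Integrable (fun x => |X i x - X j x|) μ := fun i j =>
    ((hX i).sub (hX j)).abs
  unfold chainedSum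
  dsimp only
  rw [integral_add (integrable_finsetSum _ fun k _ => h_add _ _) (h_sub _ _),
    integral_finsetSum _ fun k _ => h_add _ _]
  refine add_le_add (sum_le_sum fun k _ => ?_) ?_
  · rw [← integral_add (hX _) (hX _)]
    exact abs_integral_le_integral_abs
  · rw [← integral_sub (hX _) (hX _)]
    exact abs_integral_le_integral_abs

lemma abs_mul_setAverage_sub_integral_le {Ω : Type*} [MeasurableSpace Ω] {μ : Measure Ω}
    [IsProbabilityMeasure μ] {f : Ω → ℝ} (hf : Integrable f μ) (hf₁ : ∀ x, |f x| ≤ 1)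
    {s : Set Ω} (hs : MeasurableSet s) {γ : ℝ} (hγ : 0 < γ) (hγs : γ ≤ μ.real s) :
    |γ * ⨍ x in s, f x ∂μ - ∫ x, f x ∂μ| ≤ 1 - γ := by
  have h_bound : ∀ t : Set Ω, |∫ x in t, f x ∂μ| ≤ μ.real t := fun t => by
    simpa using norm_setIntegral_le_of_norm_le_const (measure_lt_top μ t)
      fun x _ => (Real.norm_eq_abs (f x)).trans_le (hf₁ x)
  have h_avg : μ.real s * ⨍ x in s, f x ∂μ = ∫ x in s, f x ∂μ :=
    measure_smul_setAverage f (measure_ne_top μ s)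
  have h_avg₁ : |⨍ x in s, f x ∂μ| ≤ 1 := by
    have hs_pos : 0 < μ.real s := hγ.trans_le hγs
    have h := h_bound s
    rw [← h_avg, abs_mul, abs_of_pos hs_pos] at h
    exact (mul_le_iff_le_one_right hs_pos).mp h
  have h_compl : |∫ x in sᶜ, f x ∂μ| ≤ 1 - μ.real s :=
    probReal_compl_eq_one_sub (μ := μ) hs ▸ h_bound sᶜ
  calc |γ * ⨍ x in s, f x ∂μ - ∫ x, f x ∂μ|
      = |(γ - μ.real s) * ⨍ x in s, f x ∂μ - ∫ x in sᶜ, f x ∂μ| := by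
        rw [← integral_add_compl hs hf, ← h_avg]
        ring_nf
    _ ≤ (μ.real s - γ) * 1 + (1 - μ.real s) := by
        refine (abs_sub _ _).trans (add_le_add ?_ h_compl)
        rw [abs_mul, abs_sub_comm, abs_of_nonneg (by linarith)]
        gcongr
    _ = 1 - γ := by ring

/-- The index sequence `a = (1, 2, 2, 3, 3, …, N, N, 1)` on `1, …, 2N`. -/
def chainA (N k : ℕ) : ℕ := if k = 2 * N then 1 else k / 2 + 1

/-- The index sequence `b = (1, 1, 2, 2, …, N, N)` on `1, …, 2N`. -/
def chainB (k : ℕ) : ℕ := (k + 1) / 2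

lemma chainedSum_chainA_mul_chainB_le {N : ℕ} (hN : 1 ≤ N) {α β : ℕ → ℝ}
    (hα : ∀ i, |α i| ≤ 1) (hβ : ∀ i, |β i| ≤ 1) :
    chainedSum N (fun k => α (chainA N k) * β (chainB k)) ≤ 2 * N - 2 := by
  have h_mul : ∀ u i, |u * β i| ≤ |u| := fun u i => by
    rw [abs_mul]
    exact mul_le_of_le_one_right (abs_nonneg _) (hβ i)
  refine le_trans ?_ (sum_range_abs_add_add_abs_sub_le hN hα)
  unfold chainedSum chainA chainB
  dsimp only
  refine add_le_add (sum_le_sum fun k hk => ?_) ?_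
  · have hk := mem_range.mp hk
    rw [if_neg (by omega), if_neg (by omega), show (2 * k + 1) / 2 + 1 = k + 1 by omega,
      show (2 * k + 2) / 2 + 1 = k + 2 by omega, show (2 * k + 1 + 1) / 2 = k + 1 by omega,
      show (2 * k + 2 + 1) / 2 = k + 1 by omega, ← add_mul]
    exact h_mul _ _
  · rw [if_neg (by omega), if_pos rfl, show (2 * N - 1) / 2 + 1 = N by omega,
      show (2 * N - 1 + 1) / 2 = N by omega, show (2 * N + 1) / 2 = N by omega, ← sub_mul]
    exact h_mul _ _

theorem chained_bell_inequality {Ω : Type*} [MeasurableSpace Ω] (μ : Measure Ω)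
    [IsProbabilityMeasure μ] {N : ℕ} (hN : 1 ≤ N) {A B : ℕ → Ω → ℝ}
    (hAB : ∀ i j, Integrable (fun x => A i x * B j x) μ)
    (hA₁ : ∀ i x, |A i x| ≤ 1) (hB₁ : ∀ i x, |B i x| ≤ 1) :
    chainedSum N (fun k => ∫ x, A (chainA N k) x * B (chainB k) x ∂μ) ≤ 2 * N - 2 :=
  calc _ ≤ ∫ x, chainedSum N (fun k => A (chainA N k) x * B (chainB k) x) ∂μ :=
        chainedSum_integral_le N fun k => hAB _ _
    _ ≤ ∫ _x, (2 * N - 2 : ℝ) ∂μ :=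
        integral_mono_of_nonneg (ae_of_all _ fun x => chainedSum_nonneg _ _)
          (integrable_const _)
          (ae_of_all _ fun x => chainedSum_chainA_mul_chainB_le hN (hA₁ · x) (hB₁ · x))
    _ = 2 * N - 2 := by simp

theorem pbc_with_coincidence_general
    {Ω : Type*} [MeasurableSpace Ω] (μ : Measure Ω) [IsProbabilityMeasure μ]
    (N : ℕ) (hN : 2 ≤ N) (A B : ℕ → Ω → ℝ)
    (hAmeas : ∀ i, Measurable (A i)) (hBmeas : ∀ i, Measurable (B i))
    (hAbound : ∀ i x, A i x ∈ Set.Icc (-1 : ℝ) 1)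
    (hBbound : ∀ i x, B i x ∈ Set.Icc (-1 : ℝ) 1)
    (Λ : ℕ → Set Ω) (hΛmeas : ∀ i, MeasurableSet (Λ i))
    (γ : ℝ) (hγ0 : 0 < γ)
    (hΛγ : ∀ i ∈ Finset.Icc 1 (2 * N), γ ≤ (μ (Λ i)).toReal) :
    -- index sequences a_k and b_k for k = 1,…,2N
    let a : ℕ → ℕ := fun k => if k = 2 * N then 1 else k / 2 + 1
    let b : ℕ → ℕ := fun k => (k + 1) / 2
    -- conditional expectation E(X_k | Λ_k) with X_k = A_{a_k} B_{b_k}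
    let CE : ℕ → ℝ := fun k =>
      (∫ x in Λ k, A (a k) x * B (b k) x ∂μ) / (μ (Λ k)).toReal
    (∑ k ∈ Finset.range (N - 1), |CE (2 * k + 1) + CE (2 * k + 2)|)
      + |CE (2 * N - 1) - CE (2 * N)|
      ≤ (4 * (N : ℝ) - 2) / γ - 2 * N := by
  intro a b CE
  have hA₁ : ∀ i x, |A i x| ≤ 1 := fun i x => abs_le.mpr (hAbound i x)
  have hB₁ : ∀ i x, |B i x| ≤ 1 := fun i x => abs_le.mpr (hBbound i x)
  have hAB₁ : ∀ i j x, |A i x * B j x| ≤ 1 := fun i j x => by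
    rw [abs_mul]
    exact mul_le_one₀ (hA₁ i x) (abs_nonneg _) (hB₁ j x)
  have hAB : ∀ i j, Integrable (fun x => A i x * B j x) μ := fun i j =>
    .of_bound ((hAmeas i).mul (hBmeas j)).aestronglyMeasurable 1
      (ae_of_all _ fun x => (Real.norm_eq_abs _).trans_le (hAB₁ i j x))
  have hCE : ∀ k ∈ Icc 1 (2 * N), |γ * CE k - ∫ x, A (a k) x * B (b k) x ∂μ| ≤ 1 - γ :=
    fun k hk => by
      have h_avg : CE k = ⨍ x in Λ k, A (a k) x * B (b k) x ∂μ := by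
        rw [setAverage_eq, smul_eq_mul, measureReal_def, inv_mul_eq_div]
      rw [h_avg]
      exact abs_mul_setAverage_sub_integral_le (hAB _ _) (hAB₁ _ _) (hΛmeas k) hγ0 (hΛγ k hk)
  have h_scaled : γ * chainedSum N CE ≤ 2 * N - 2 + 2 * N * (1 - γ) :=
    calc γ * chainedSum N CE = chainedSum N (fun k => γ * CE k) :=
          (chainedSum_const_mul hγ0.le N CE).symm
      _ ≤ chainedSum N (fun k => ∫ x, A (chainA N k) x * B (chainB k) x ∂μ)
            + 2 * N * (1 - γ) := chainedSum_le_add_of_abs_sub_le (by omega) hCE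
      _ ≤ 2 * N - 2 + 2 * N * (1 - γ) := by
          gcongr
          exact chained_bell_inequality μ (by omega) hAB hA₁ hB₁
  show chainedSum N CE ≤ _
  rw [le_sub_iff_add_le, le_div_iff₀ hγ0]
  linarith

/-- PBC inequality with coincidence probability: for N ≥ 2, random variables
    A₁,…,A_N, B₁,…,B_N with values in [-1,1], and events Λ₁,…,Λ_{2N} with
    P(Λ_i) ≥ γ, 0 < γ ≤ 1, the chained sum of conditional expectations of
    X_i = A_{a_i} B_{b_i} (a = (1,2,2,3,…,N,N,1), b = (1,1,2,2,…,N,N)) satisfies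
    S_{C,N} ≤ (4N-2)/γ - 2N. -/
theorem pbc_with_coincidence
    {Ω : Type*} [MeasurableSpace Ω] (μ : Measure Ω) [IsProbabilityMeasure μ]
    (N : ℕ) (hN : 2 ≤ N) (A B : ℕ → Ω → ℝ)
    (hAmeas : ∀ i, Measurable (A i)) (hBmeas : ∀ i, Measurable (B i))
    (hAbound : ∀ i x, A i x ∈ Set.Icc (-1 : ℝ) 1)
    (hBbound : ∀ i x, B i x ∈ Set.Icc (-1 : ℝ) 1)
    (Λ : ℕ → Set Ω) (hΛmeas : ∀ i, MeasurableSet (Λ i))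
    (γ : ℝ) (hγ0 : 0 < γ) (hγ1 : γ ≤ 1)
    (hΛγ : ∀ i ∈ Finset.Icc 1 (2 * N), γ ≤ (μ (Λ i)).toReal) :
    -- index sequences a_k and b_k for k = 1,…,2N
    let a : ℕ → ℕ := fun k => if k = 2 * N then 1 else k / 2 + 1
    let b : ℕ → ℕ := fun k => (k + 1) / 2
    -- conditional expectation E(X_k | Λ_k) with X_k = A_{a_k} B_{b_k}
    let CE : ℕ → ℝ := fun k =>
      (∫ x in Λ k, A (a k) x * B (b k) x ∂μ) / (μ (Λ k)).toReal
    (∑ k ∈ Finset.range (N - 1), |CE (2 * k + 1) + CE (2 * k + 2)|)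
      + |CE (2 * N - 1) - CE (2 * N)|
      ≤ (4 * (N : ℝ) - 2) / γ - 2 * N :=
  pbc_with_coincidence_general μ N hN A B hAmeas hBmeas hAbound hBbound Λ hΛmeas γ hγ0 hΛγ
end

section
/- The sequence γ_{crit,N} = ((2N-1)/(2N))·(1 + tan²(π/(4N))) is strictly increasing in N for integers N ≥ 2, and converges to 1 as N → ∞. -/
/-!
Since `1 + tan² θ = 2 / (1 + cos 2θ)`, we have `γ(x) = (2x - 1) / (x (1 + cos (π / 2x)))`.
With `c = cos (π / 2x)` and `d = cos (π / (2x + 2))`, the inequality `γ(x) < γ(x + 1)` is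
equivalent to `(2x - 1)(x + 1)(d - c) < 1 + c`. For `x ≥ 2` the left side is at most `π² / 6`,
because `cos b - cos a ≤ (a² - b²) / 2` (product-to-sum and `|sin t| ≤ |t|`), while the right
side is at least `2 - π² / 32` because `cos t ≥ 1 - t² / 2`; these compare correctly as
`π² < 10`.
The limit follows from continuity of `tan` at `0`.
-/

open Real Filter

theorem Real.cos_sub_cos_le_abs_sq_sub_sq (a b : ℝ) : cos b - cos a ≤ |a ^ 2 - b ^ 2| / 2 := by
  have hs : |sin ((b + a) / 2) * sin ((b - a) / 2)| ≤ |(b + a) / 2| * |(b - a) / 2| := by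
    rw [abs_mul]
    exact mul_le_mul abs_sin_le_abs abs_sin_le_abs (abs_nonneg _) (abs_nonneg _)
  calc cos b - cos a = -2 * (sin ((b + a) / 2) * sin ((b - a) / 2)) := by rw [cos_sub_cos]; ring
    _ ≤ 2 * (|(b + a) / 2| * |(b - a) / 2|) := by
      linarith [neg_abs_le (sin ((b + a) / 2) * sin ((b - a) / 2)), hs]
    _ = |a ^ 2 - b ^ 2| / 2 := by
      rw [← abs_mul, show (b + a) / 2 * ((b - a) / 2) = (b ^ 2 - a ^ 2) / 4 by ring, abs_div,
        abs_sub_comm]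
      norm_num
      ring

theorem Real.one_add_tan_sq_eq_two_div {x : ℝ} (hx : cos x ≠ 0) :
    1 + tan x ^ 2 = 2 / (1 + cos (2 * x)) := by
  rw [← inv_inv (1 + tan x ^ 2), inv_one_add_tan_sq hx, cos_sq x, ← add_div, inv_div]

noncomputable def gammaCrit (x : ℝ) : ℝ := (2 * x - 1) / (2 * x) * (1 + tan (π / (4 * x)) ^ 2)

theorem gammaCrit_eq_div_one_add_cos {x : ℝ} (hx : 1 / 2 < x) :
    gammaCrit x = (2 * x - 1) / (x * (1 + cos (π / (2 * x)))) := by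
  have hx0 : 0 < x := by linarith
  have hcos : cos (π / (4 * x)) ≠ 0 := by
    have harg : 0 < π / (4 * x) := by positivity
    refine (cos_pos_of_mem_Ioo ⟨by linarith [pi_pos], ?_⟩).ne'
    rw [div_lt_div_iff₀ (by positivity) two_pos]
    nlinarith [pi_pos]
  rw [gammaCrit, one_add_tan_sq_eq_two_div hcos,
    show 2 * (π / (4 * x)) = π / (2 * x) by field_simp; ring]
  field_simp

theorem one_sub_pi_sq_div_le_cos_pi_div_two_mul (x : ℝ) :
    1 - π ^ 2 / (8 * x ^ 2) ≤ cos (π / (2 * x)) := by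
  convert one_sub_sq_div_two_le_cos (x := π / (2 * x)) using 2
  ring

theorem cos_pi_div_two_mul_add_one_sub_cos_le {x : ℝ} (hx : 0 < x) :
    cos (π / (2 * (x + 1))) - cos (π / (2 * x)) ≤
      π ^ 2 * (2 * x + 1) / (8 * x ^ 2 * (x + 1) ^ 2) := by
  have hsq : (π / (2 * x)) ^ 2 - (π / (2 * (x + 1))) ^ 2 =
      π ^ 2 * (2 * x + 1) / (4 * x ^ 2 * (x + 1) ^ 2) := by
    field_simp
    ring
  calc _ ≤ |(π / (2 * x)) ^ 2 - (π / (2 * (x + 1))) ^ 2| / 2 := cos_sub_cos_le_abs_sq_sub_sq _ _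
    _ = _ := by
      rw [hsq, abs_of_nonneg (by positivity)]
      field_simp
      ring

theorem gammaCrit_lt_gammaCrit_add_one {x : ℝ} (hx : 2 ≤ x) :
    gammaCrit x < gammaCrit (x + 1) := by
  have hx0 : 0 < x := by linarith
  rw [gammaCrit_eq_div_one_add_cos (by linarith), gammaCrit_eq_div_one_add_cos (by linarith)]
  set c := cos (π / (2 * x))
  set d := cos (π / (2 * (x + 1)))
  have hπ : π ^ 2 < 10 := by nlinarith [pi_lt_d2, pi_pos]
  have hc : 2 - π ^ 2 / 32 ≤ 1 + c := by
    have : π ^ 2 / (8 * x ^ 2) ≤ π ^ 2 / 32 := by gcongr; nlinarith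
    linarith [one_sub_pi_sq_div_le_cos_pi_div_two_mul x]
  have hd : 0 < 1 + d := by
    have : π ^ 2 / (8 * (x + 1) ^ 2) ≤ π ^ 2 / 32 := by gcongr; nlinarith
    linarith [one_sub_pi_sq_div_le_cos_pi_div_two_mul (x + 1)]
  have key : (2 * x - 1) * (x + 1) * (d - c) < 1 + c := calc
    _ ≤ (2 * x - 1) * (x + 1) * (π ^ 2 * (2 * x + 1) / (8 * x ^ 2 * (x + 1) ^ 2)) := by
      gcongr
      · exact mul_nonneg (by linarith) (by linarith)
      · exact cos_pi_div_two_mul_add_one_sub_cos_le hx0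
    _ = π ^ 2 * (4 * x ^ 2 - 1) / (8 * x ^ 2 * (x + 1)) := by field_simp; ring
    _ ≤ π ^ 2 / 6 := by
      rw [div_le_div_iff₀ (by positivity) (by norm_num)]
      have : 0 ≤ 8 * x ^ 2 * (x - 2) + 6 := by
        have := mul_nonneg (sq_nonneg x) (sub_nonneg.2 hx)
        linarith
      nlinarith [mul_nonneg (sq_nonneg π) this]
    _ < 2 - π ^ 2 / 32 := by linarith
    _ ≤ 1 + c := hc
  rw [div_lt_div_iff₀ (by nlinarith) (by positivity)]
  linear_combination key

theorem strictMonoOn_gammaCrit_natCast : StrictMonoOn (fun n : ℕ => gammaCrit n) (Set.Ici 2) :=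
  strictMonoOn_of_lt_succ Set.ordConnected_Ici fun n _ hn _ => by
    simpa [Order.succ_eq_add_one] using
      gammaCrit_lt_gammaCrit_add_one (x := n) (by exact_mod_cast Set.mem_Ici.1 hn)

theorem tendsto_gammaCrit_atTop : Tendsto gammaCrit atTop (nhds 1) := by
  have h2x : Tendsto (fun x : ℝ => 2 * x) atTop atTop := tendsto_id.const_mul_atTop two_pos
  have hfrac : Tendsto (fun x : ℝ => (2 * x - 1) / (2 * x)) atTop (nhds 1) := by
    have := tendsto_const_nhds (x := (1 : ℝ)).sub (tendsto_inv_atTop_zero.comp h2x)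
    rw [sub_zero] at this
    refine this.congr' ?_
    filter_upwards [eventually_gt_atTop 0] with x hx
    simp only [Function.comp_apply]
    field_simp
  have htan : Tendsto (fun x : ℝ => tan (π / (4 * x))) atTop (nhds 0) := by
    have harg : Tendsto (fun x : ℝ => π / (4 * x)) atTop (nhds 0) :=
      tendsto_const_nhds.div_atTop (tendsto_id.const_mul_atTop four_pos)
    rw [← tan_zero]
    exact (continuousAt_tan.2 (by simp)).tendsto.comp harg
  have := hfrac.mul (tendsto_const_nhds (x := (1 : ℝ)).add (htan.pow 2))
  rwa [zero_pow two_ne_zero, add_zero, mul_one] at this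

/-- γ_{crit,N} = ((2N-1)/(2N))·(1 + tan²(π/(4N))) is strictly increasing in N
    for integers N ≥ 2 and converges to 1 as N → ∞. -/
theorem gamma_crit_monotone_and_limit :
    (∀ M N : ℕ, 2 ≤ M → M < N →
      ((2 * (M : ℝ) - 1) / (2 * M)) * (1 + Real.tan (π / (4 * M)) ^ 2) <
        ((2 * (N : ℝ) - 1) / (2 * N)) * (1 + Real.tan (π / (4 * N)) ^ 2)) ∧
    Tendsto (fun N : ℕ =>
        ((2 * (N : ℝ) - 1) / (2 * N)) * (1 + Real.tan (π / (4 * N)) ^ 2))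
      atTop (nhds 1) :=
  ⟨fun _ _ hM hMN => strictMonoOn_gammaCrit_natCast hM (hM.trans hMN.le) hMN,
    tendsto_gammaCrit_atTop.comp tendsto_natCast_atTop_atTop⟩
end

section
/- For every integer N ≥ 2, the critical coincidence probability strictly exceeds the critical detection efficiency: ((2N-1)/(2N))·(1 + tan²(π/(4N))) > 2/((N/(N-1))·cos(π/(2N)) + 1). -/
open Real

/-! With `x = π / (4N)` we have `cos (π / (2N)) = 2 cos² x - 1` and `1 + tan² x = 1 / cos² x`, and
after clearing denominators the inequality becomes `2N cos² x > 2N - 1`, i.e. `2N sin² x < 1`.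
This follows from `sin² x ≤ x² = π² / (16 N²)` and `π² < 16 ≤ 8N`. -/

theorem two_div_lt_div_of_lt_mul {n a : ℝ} (hn : 1 < n) (ha : 2 * n - 1 < 2 * n * a) :
    2 / (n / (n - 1) * (2 * a - 1) + 1) < (2 * n - 1) / (2 * n) / a := by
  have hn1 : 0 < n - 1 := by linarith
  have ha0 : 0 < a := by nlinarith
  have hden : n / (n - 1) * (2 * a - 1) + 1 = (2 * n * a - 1) / (n - 1) := by
    field_simp; ring
  rw [hden, div_div_eq_mul_div, div_div, div_lt_div_iff₀ (by linarith) (by positivity)]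
  nlinarith

theorem two_div_lt_of_two_mul_sin_sq_lt_one {n x : ℝ} (hn : 1 < n) (hx : 2 * n * sin x ^ 2 < 1) :
    2 / (n / (n - 1) * cos (2 * x) + 1) < (2 * n - 1) / (2 * n) * (1 + tan x ^ 2) := by
  have hcos : 2 * n - 1 < 2 * n * cos x ^ 2 := by rw [cos_sq']; linarith
  have hcos0 : cos x ≠ 0 := by rintro h; rw [h] at hcos; nlinarith
  rw [cos_two_mul, ← inv_inv (1 + tan x ^ 2), inv_one_add_tan_sq hcos0, ← div_eq_mul_inv]
  exact two_div_lt_div_of_lt_mul hn hcos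

theorem two_mul_sin_sq_pi_div_four_mul_lt_one {n : ℝ} (hn : 2 ≤ n) :
    2 * n * sin (π / (4 * n)) ^ 2 < 1 := by
  have hsq : π ^ 2 < 8 * n := by nlinarith [pi_pos, pi_lt_four]
  calc 2 * n * sin (π / (4 * n)) ^ 2 ≤ 2 * n * (π / (4 * n)) ^ 2 :=
        mul_le_mul_of_nonneg_left sin_sq_le_sq (by positivity)
    _ = π ^ 2 / (8 * n) := by field_simp; ring
    _ < 1 := by rw [div_lt_one (by positivity)]; exact hsq

/-- For every integer N ≥ 2, the critical coincidence probability strictly exceeds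
    the critical detection efficiency:
    ((2N-1)/(2N))·(1 + tan²(π/(4N))) > 2/((N/(N-1))·cos(π/(2N)) + 1). -/
theorem gamma_crit_gt_eta_crit (N : ℕ) (hN : 2 ≤ N) :
    2 / (((N : ℝ) / ((N : ℝ) - 1)) * Real.cos (π / (2 * N)) + 1) <
      ((2 * (N : ℝ) - 1) / (2 * N)) * (1 + Real.tan (π / (4 * N)) ^ 2) := by
  have hN' : (2 : ℝ) ≤ N := by exact_mod_cast hN
  have hangle : π / (2 * N) = 2 * (π / (4 * N)) := by field_simp; ring
  rw [hangle]
  exact two_div_lt_of_two_mul_sin_sq_lt_one (by linarith)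
    (two_mul_sin_sq_pi_div_four_mul_lt_one hN')
end

section
/- The sequence η_{crit,N} = 2/((N/(N-1))·cos(π/(2N)) + 1) is strictly increasing in N for integers N ≥ 2 and converges to 1 as N → ∞. -/
/-! Writing `φ = (π / 2) (1 - 1/N)`, the denominator is `N / (N - 1) · cos (π / (2N)) + 1 =
(π / 2) · sin φ / φ + 1`. As `N` grows, `φ` increases to `π / 2`, while `sin φ / φ` is strictly
decreasing on `[0, π]` because `sin` is strictly concave there with `sin 0 = 0`; so the denominator
strictly decreases to `(π / 2) · (2 / π) + 1 = 2`. -/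

open Real Filter Set

namespace Real

theorem sinc_strictAntiOn : StrictAntiOn sinc (Icc 0 π) := by
  intro x hx y hy hxy
  have hy0 : y ≠ 0 := (hx.1.trans_lt hxy).ne'
  rw [sinc_of_ne_zero hy0]
  rcases hx.1.eq_or_lt with rfl | hx0
  · rw [sinc_zero, div_lt_one (hx.1.trans_lt hxy)]
    exact sin_lt (hx.1.trans_lt hxy)
  · have := strictConcaveOn_sin_Icc.secant_strict_mono ⟨le_rfl, pi_pos.le⟩ hx hy
      hx0.ne' hy0 hxy
    simpa [sinc_of_ne_zero hx0.ne'] using this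

theorem sinc_nonneg_of_mem_Icc {x : ℝ} (hx : x ∈ Icc 0 π) : 0 ≤ sinc x := by
  rw [sinc_apply]
  split_ifs
  · exact zero_le_one
  · exact div_nonneg (sin_nonneg_of_nonneg_of_le_pi hx.1 hx.2) hx.1

theorem sinc_pi_div_two : sinc (π / 2) = 2 / π := by
  rw [sinc_of_ne_zero pi_div_two_pos.ne', sin_pi_div_two, one_div_div]

end Real

noncomputable def etaCrit (x : ℝ) : ℝ := 2 / (x / (x - 1) * cos (π / (2 * x)) + 1)

theorem div_sub_one_mul_cos_eq_sinc {x : ℝ} (hx0 : x ≠ 0) (hx1 : x ≠ 1) :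
    x / (x - 1) * cos (π / (2 * x)) = π / 2 * sinc (π / 2 * (1 - x⁻¹)) := by
  have hφ : π / 2 * (1 - x⁻¹) ≠ 0 := by
    have : 1 - x⁻¹ ≠ 0 := by
      rw [sub_ne_zero, ne_comm, inv_ne_one]
      exact hx1
    exact mul_ne_zero pi_div_two_pos.ne' this
  rw [sinc_of_ne_zero hφ, ← cos_pi_div_two_sub]
  have hx1' : x - 1 ≠ 0 := sub_ne_zero.mpr hx1
  field_simp
  ring_nf

theorem etaCrit_eq {x : ℝ} (hx0 : x ≠ 0) (hx1 : x ≠ 1) :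
    etaCrit x = 2 / (π / 2 * sinc (π / 2 * (1 - x⁻¹)) + 1) := by
  rw [etaCrit, div_sub_one_mul_cos_eq_sinc hx0 hx1]

theorem pi_div_two_mul_one_sub_inv_mem_Icc {x : ℝ} (hx : 1 ≤ x) :
    π / 2 * (1 - x⁻¹) ∈ Icc 0 π := by
  have hinv : x⁻¹ ≤ 1 := inv_le_one_of_one_le₀ hx
  have hinv0 : 0 ≤ x⁻¹ := inv_nonneg.mpr (zero_le_one.trans hx)
  constructor <;> nlinarith [pi_pos]

theorem etaCrit_strictMonoOn : StrictMonoOn etaCrit (Ioi 1) := by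
  intro x (hx : 1 < x) y (hy : 1 < y) hxy
  have hφx := pi_div_two_mul_one_sub_inv_mem_Icc hx.le
  have hφy := pi_div_two_mul_one_sub_inv_mem_Icc hy.le
  have hφ : π / 2 * (1 - x⁻¹) < π / 2 * (1 - y⁻¹) := by gcongr
  have hsinc := sinc_strictAntiOn hφx hφy hφ
  have hpos := sinc_nonneg_of_mem_Icc hφy
  rw [etaCrit_eq (by positivity) hx.ne', etaCrit_eq (by positivity) hy.ne']
  gcongr

theorem tendsto_etaCrit_atTop : Tendsto etaCrit atTop (nhds 1) := by
  have hφ : Tendsto (fun x : ℝ => π / 2 * (1 - x⁻¹)) atTop (nhds (π / 2)) := by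
    simpa using ((tendsto_const_nhds (x := (1 : ℝ))).sub tendsto_inv_atTop_zero).const_mul (π / 2)
  have hlim : Tendsto (fun x : ℝ => 2 / (π / 2 * sinc (π / 2 * (1 - x⁻¹)) + 1)) atTop
      (nhds (2 / (π / 2 * sinc (π / 2) + 1))) :=
    tendsto_const_nhds.div ((((continuous_sinc.tendsto _).comp hφ).const_mul _).add_const 1)
      (by positivity [sinc_nonneg_of_mem_Icc ⟨pi_div_two_pos.le, half_le_self pi_pos.le⟩])
  have hden : π / 2 * sinc (π / 2) + 1 = 2 := by
    rw [sinc_pi_div_two]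
    field_simp
    norm_num
  rw [hden, div_self two_ne_zero] at hlim
  refine hlim.congr' ?_
  filter_upwards [eventually_gt_atTop 1] with x hx
  exact (etaCrit_eq (by positivity) hx.ne').symm

/-- η_{crit,N} = 2/((N/(N-1))·cos(π/(2N)) + 1) is strictly increasing in N
    for integers N ≥ 2 and converges to 1 as N → ∞. -/
theorem eta_crit_monotone_and_limit :
    (∀ M N : ℕ, 2 ≤ M → M < N →
      2 / (((M : ℝ) / ((M : ℝ) - 1)) * Real.cos (π / (2 * M)) + 1) <
        2 / (((N : ℝ) / ((N : ℝ) - 1)) * Real.cos (π / (2 * N)) + 1)) ∧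
    Tendsto (fun N : ℕ =>
        2 / (((N : ℝ) / ((N : ℝ) - 1)) * Real.cos (π / (2 * N)) + 1))
      atTop (nhds 1) := by
  refine ⟨fun M N hM hMN => ?_, tendsto_etaCrit_atTop.comp tendsto_natCast_atTop_atTop⟩
  have hM' : (1 : ℝ) < M := by exact_mod_cast hM
  exact etaCrit_strictMonoOn hM' (hM'.trans (by exact_mod_cast hMN)) (by exact_mod_cast hMN)
end
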